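/- Let X^{(1)},…,X^{(n)} be real payoff tensors of format d_1×···×d_n, set m = d_1 + ⋯ + d_n and N = d_1·d_2·⋯·d_n, and let x, x' ∈ ℝ^n. Suppose the real matrix K_X(x) has rank m, and suppose that for every choice of m columns (i.e., for every order-preserving injection from [m] into the set of N column indices) the determinants of the corresponding m×m submatrices of K_X(x) and of K_X(x') have the same sign (both positive, both negative, or both zero). Then there exists a tensor P with all entries positive satisfying K_X(x)·P = 0 if and only if there exists a tensor P' with all entries positive satisfying K_X(x')·P' = 0. (Membership of a point in the payoff region depends only on its oriented matroid stratum.) -/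

import Mathlib

open Finset

open Finset Submodule Module

namespace PayoffAux

variable {R C : Type*} [Fintype R] [DecidableEq R] [Fintype C] [DecidableEq C]

noncomputable section

def toE (y : R → ℝ) : EuclideanSpace ℝ R := WithLp.toLp 2 y

def colE (A : Matrix R C ℝ) (e : C) : EuclideanSpace ℝ R := WithLp.toLp 2 (fun r => A r e)

lemma inner_eq_sum (v w : EuclideanSpace ℝ R) : (inner ℝ v w : ℝ) = ∑ r, v r * w r := by
  simp [PiLp.inner_apply, RCLike.inner_apply, starRingEnd_apply, mul_comm]

lemma inner_colE (A : Matrix R C ℝ) (e : C) (y : EuclideanSpace ℝ R) :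
    (inner ℝ (colE A e) y : ℝ) = Matrix.vecMul y A e := by
  rw [inner_eq_sum]
  simp [colE, toE, Matrix.vecMul, dotProduct, mul_comm]

lemma mem_orth_span_range {ι : Type*} (v : ι → EuclideanSpace ℝ R) (y : EuclideanSpace ℝ R)
    (h : ∀ i, (inner ℝ (v i) y : ℝ) = 0) : y ∈ (Submodule.span ℝ (Set.range v))ᗮ := by
  rw [Submodule.mem_orthogonal]
  intro u hu
  induction hu using Submodule.span_induction with
  | mem x hx => obtain ⟨i, rfl⟩ := hx; exact h i
  | zero => simp
  | add x y hx hy ihx ihy => rw [inner_add_left, ihx, ihy, add_zero]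
  | smul a x hx ih => rw [inner_smul_left, ih, mul_zero]

lemma mem_orth_span_set (s : Set (EuclideanSpace ℝ R)) (y : EuclideanSpace ℝ R)
    (h : ∀ u ∈ s, (inner ℝ u y : ℝ) = 0) : y ∈ (Submodule.span ℝ s)ᗮ := by
  rw [Submodule.mem_orthogonal]
  intro u hu
  induction hu using Submodule.span_induction with
  | mem x hx => exact h x hx
  | zero => simp
  | add x y hx hy ihx ihy => rw [inner_add_left, ihx, ihy, add_zero]
  | smul a x hx ih => rw [inner_smul_left, ih, mul_zero]

/-- if the columns of `A` span everything, a vector with zero `vecMul` is zero -/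
lemma eq_zero_of_vecMul_eq_zero (A : Matrix R C ℝ)
    (hsp : Submodule.span ℝ (Set.range (colE A)) = ⊤)
    (y : R → ℝ) (h : Matrix.vecMul y A = 0) : y = 0 := by
  have hy : toE y ∈ (Submodule.span ℝ (Set.range (colE A)))ᗮ := by
    apply mem_orth_span_range
    intro e
    rw [inner_colE]
    exact congrFun h e
  rw [hsp] at hy
  have : (inner ℝ (toE y) (toE y) : ℝ) = 0 := hy (toE y) trivial
  have := inner_self_eq_zero.mp this
  simpa [toE] using this

end

end PayoffAux

namespace PayoffAux
set_option linter.unusedSectionVars false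

variable {R C : Type*} [Fintype R] [DecidableEq R] [Fintype C] [DecidableEq C]

noncomputable section

lemma sign_transfer {a b : ℝ} (h : Real.sign a = Real.sign b) :
    (0 < a ↔ 0 < b) ∧ (a = 0 ↔ b = 0) := by
  rcases lt_trichotomy a 0 with ha | ha | ha <;>
    rcases lt_trichotomy b 0 with hb | hb | hb <;>
      simp only [Real.sign_of_neg, Real.sign_of_pos, Real.sign_zero, ha, hb] at h <;>
        first
          | (constructor <;> constructor <;> intro h' <;> first | assumption | linarith)
          | norm_num at h

lemma det_submatrix_zero_of_not_inj (A : Matrix R C ℝ) (cs : R → C)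
    (h : ¬ Function.Injective cs) : (A.submatrix id cs).det = 0 := by
  obtain ⟨r1, r2, hcs, hne⟩ := Function.not_injective_iff.mp h
  exact Matrix.det_zero_of_column_eq hne (fun k => by simp [Matrix.submatrix_apply, hcs])

/-- the key multilinearity identity:  the determinant of the submatrix with columns
`update cols r0 e` is linear in the column `e`. -/
lemma det_update_eq (A : Matrix R C ℝ) (cols : R → C) (r0 : R) (e : C) :
    (A.submatrix id (Function.update cols r0 e)).det
      = Matrix.vecMul
          (fun r => (A.submatrix id cols).cramer (fun j => if r = j then 1 else 0) r0) A e := by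
  have hM : A.submatrix id (Function.update cols r0 e)
      = (A.submatrix id cols).updateCol r0 (fun r => A r e) := by
    ext r r'
    by_cases h : r' = r0 <;>
      simp [Matrix.updateCol_apply, Matrix.submatrix_apply, Function.update, h]
  rw [hM, ← Matrix.cramer_apply]
  have hlin := LinearMap.pi_apply_eq_sum_univ
    (Matrix.cramer (A.submatrix id cols)) (fun r => A r e)
  have := congrFun hlin r0
  rw [this]
  simp only [Matrix.vecMul, dotProduct, Finset.sum_apply, Pi.smul_apply, smul_eq_mul]
  exact Finset.sum_congr rfl (fun r _ => mul_comm _ _)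

lemma stiemke_easy (A : Matrix R C ℝ) (y : R → ℝ)
    (h1 : ∀ e, 0 ≤ Matrix.vecMul y A e) (h2 : Matrix.vecMul y A ≠ 0)
    (P : C → ℝ) (hP : ∀ e, 0 < P e) (hAP : A.mulVec P = 0) : False := by
  have h0 : dotProduct (Matrix.vecMul y A) P = 0 := by
    rw [← Matrix.dotProduct_mulVec, hAP, dotProduct_zero]
  have hsum : ∑ e, Matrix.vecMul y A e * P e = 0 := h0
  have hall := (Finset.sum_eq_zero_iff_of_nonneg
    (fun e _ => mul_nonneg (h1 e) (hP e).le)).mp hsum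
  apply h2
  funext e
  have := hall e (Finset.mem_univ e)
  rcases mul_eq_zero.mp this with h | h
  · exact h
  · exact absurd h (ne_of_gt (hP e))

end

end PayoffAux


namespace PayoffAux
set_option linter.unusedSectionVars false

variable {R C : Type*} [Fintype R] [DecidableEq R] [Fintype C] [DecidableEq C]

noncomputable section

lemma sum_apply_E {ι : Type*} (s : Finset ι) (v : ι → EuclideanSpace ℝ C) (e : C) :
    (∑ i ∈ s, v i) e = ∑ i ∈ s, v i e :=
  by rw [WithLp.ofLp_sum]; exact Finset.sum_apply e s _

lemma stiemke_hard (A : Matrix R C ℝ)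
    (h : ¬ ∃ P : C → ℝ, (∀ e, 0 < P e) ∧ A.mulVec P = 0) :
    ∃ y : R → ℝ, (∀ e, 0 ≤ Matrix.vecMul y A e) ∧ Matrix.vecMul y A ≠ 0 := by
  classical
  set s : Set (C → ℝ) := Set.univ.pi (fun _ => Set.Ioi (0:ℝ)) with hs_def
  have hmem_s : ∀ P : C → ℝ, P ∈ s ↔ ∀ e, 0 < P e := by
    intro P; simp [hs_def, Set.mem_pi]
  have hs_conv : Convex ℝ s := convex_pi (fun i _ => convex_Ioi 0)
  have hs_open : IsOpen s := isOpen_set_pi Set.finite_univ (fun a _ => isOpen_Ioi)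
  have hdisj : Disjoint s (LinearMap.ker A.mulVecLin : Set (C → ℝ)) := by
    rw [Set.disjoint_left]
    intro P hPs hPt
    exact h ⟨P, (hmem_s P).mp hPs, by
      simpa [Matrix.mulVecLin_apply] using (LinearMap.mem_ker.mp hPt)⟩
  obtain ⟨f, u, hfs, hft⟩ := geometric_hahn_banach_open hs_conv hs_open
    (LinearMap.ker A.mulVecLin).convex hdisj
  have hu0 : u ≤ 0 := by simpa using hft 0 (Submodule.zero_mem _)
  have hker0 : ∀ P : C → ℝ, A.mulVec P = 0 → f P = 0 := by
    intro P hPk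
    by_contra hfP
    have hmem : ((u - 1) / f P) • P ∈ (LinearMap.ker A.mulVecLin : Set (C → ℝ)) :=
      Submodule.smul_mem _ _ (by simp [LinearMap.mem_ker, Matrix.mulVecLin_apply, hPk])
    have h2 := hft _ hmem
    rw [map_smul, smul_eq_mul, div_mul_cancel₀ _ hfP] at h2
    linarith
  have hone : (fun _ => (1:ℝ)) ∈ s := (hmem_s _).mpr (fun _ => one_pos)
  have h1neg : f (fun _ => (1:ℝ)) < 0 := lt_of_lt_of_le (hfs _ hone) hu0
  have hdecomp : ∀ P : C → ℝ, f P = ∑ e, P e * f (fun j => if e = j then 1 else 0) := by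
    intro P
    have := LinearMap.pi_apply_eq_sum_univ (f : (C → ℝ) →ₗ[ℝ] ℝ) P
    simpa [smul_eq_mul] using this
  have hgnonpos : ∀ e, f (fun j => if e = j then (1:ℝ) else 0) ≤ 0 := by
    intro e
    by_contra hpos
    push_neg at hpos
    have hb : f (fun _ => (1:ℝ)) < 0 := h1neg
    set eps : ℝ := f (fun j => if e = j then (1:ℝ) else 0) / (-2 * f (fun _ => (1:ℝ))) with heps_def
    have heps : 0 < eps := div_pos hpos (by linarith)
    have hmem : (fun j => (if e = j then (1:ℝ) else 0) + eps) ∈ s := by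
      refine (hmem_s _).mpr (fun j => ?_)
      by_cases hj : e = j <;> simp [hj] <;> linarith
    have hlt := hfs _ hmem
    have hrw : (fun j => (if e = j then (1:ℝ) else 0) + eps)
        = (fun j => if e = j then (1:ℝ) else 0) + eps • (fun _ => (1:ℝ)) := by
      funext j; simp [smul_eq_mul]
    rw [hrw, map_add, map_smul, smul_eq_mul] at hlt
    have hεb : eps * (-2 * f (fun _ => (1:ℝ))) = f (fun j => if e = j then (1:ℝ) else 0) :=
      div_mul_cancel₀ _ (ne_of_gt (by linarith : (0:ℝ) < -2 * f (fun _ => 1)))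
    linarith
  set c : C → ℝ := fun e => -(f (fun j => if e = j then 1 else 0)) with hc_def
  set V : Submodule ℝ (EuclideanSpace ℝ C) :=
    Submodule.span ℝ (Set.range fun r => (WithLp.toLp 2 (fun e => A r e) : EuclideanSpace ℝ C)) with hV_def
  have hrow_mem : ∀ r, (WithLp.toLp 2 (fun e => A r e) : EuclideanSpace ℝ C) ∈ V :=
    fun r => Submodule.subset_span ⟨r, rfl⟩
  have hcV : (show EuclideanSpace ℝ C from WithLp.toLp 2 c) ∈ V := by
    rw [← Submodule.orthogonal_orthogonal V, Submodule.mem_orthogonal]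
    intro w hw
    have hwker : A.mulVec w = 0 := by
      funext r
      have hin := (Submodule.mem_orthogonal V w).mp hw _ (hrow_mem r)
      rw [inner_eq_sum] at hin
      simpa [Matrix.mulVec, dotProduct] using hin
    have hfw : f w = 0 := hker0 w hwker
    rw [inner_eq_sum]
    have hwc : ∑ e, w e * c e = -(f w) := by
      rw [hdecomp w, ← Finset.sum_neg_distrib]
      exact Finset.sum_congr rfl (fun e _ => by simp only [hc_def]; ring)
    rw [hwc, hfw, neg_zero]
  obtain ⟨y, hy⟩ := (mem_span_range_iff_exists_fun ℝ).mp hcV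
  have hyc : Matrix.vecMul y A = c := by
    funext e
    have he := congrArg (fun v => v e) hy
    have hsum : (∑ r, y r • (WithLp.toLp 2 (fun e => A r e) : EuclideanSpace ℝ C)) e
        = ∑ r, y r * A r e := by
      rw [sum_apply_E]
      rfl
    rw [hsum] at he
    simpa [Matrix.vecMul, dotProduct] using he
  refine ⟨y, ?_, ?_⟩
  · intro e
    rw [hyc]
    exact neg_nonneg.mpr (hgnonpos e)
  · rw [hyc]
    intro hzero
    have hzz : f (fun _ => (1:ℝ)) = 0 := by
      rw [hdecomp]
      refine Finset.sum_eq_zero (fun e _ => ?_)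
      have hce : c e = 0 := congrFun hzero e
      simp only [hc_def] at hce
      simp only [one_mul]
      linarith [neg_eq_zero.mp hce]
    linarith

end

end PayoffAux


namespace PayoffAux
set_option linter.unusedSectionVars false

variable {R C : Type*} [Fintype R] [DecidableEq R] [Fintype C] [DecidableEq C]

noncomputable section

lemma mulVec_eq_sum_smul_colE (A : Matrix R C ℝ) (cs : R → C) (g : R → ℝ) :
    (∑ r', g r' • colE A (cs r')) = toE ((A.submatrix id cs).mulVec g) := by
  ext i
  rw [sum_apply_E]
  simp [colE, toE, Matrix.mulVec, dotProduct, Matrix.submatrix_apply, mul_comm]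

lemma det_ne_zero_iff_indep (A : Matrix R C ℝ) (cs : R → C) :
    (A.submatrix id cs).det ≠ 0 ↔ LinearIndependent ℝ (fun r' => colE A (cs r')) := by
  constructor
  · intro hdet
    rw [Fintype.linearIndependent_iff]
    intro g hg r
    by_contra hgr
    have hv : g ≠ 0 := fun h0 => hgr (by rw [h0]; rfl)
    apply hdet
    apply Matrix.exists_mulVec_eq_zero_iff.mp
    refine ⟨g, hv, ?_⟩
    have hmv := mulVec_eq_sum_smul_colE A cs g
    rw [hg] at hmv
    simpa [toE] using hmv.symm
  · intro hind hdet0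
    obtain ⟨v, hv0, hv⟩ := Matrix.exists_mulVec_eq_zero_iff.mpr hdet0
    have hz : (∑ r', v r' • colE A (cs r')) = 0 := by
      rw [mulVec_eq_sum_smul_colE, hv]
      rfl
    have := (Fintype.linearIndependent_iff.mp hind) v hz
    exact hv0 (funext this)

lemma obst_of_cobst (A : Matrix R C ℝ)
    (cols : R → C) (r0 : R) (ε : ℝ) (hε : ε = 1 ∨ ε = -1)
    (hnn : ∀ e, 0 ≤ ε * (A.submatrix id (Function.update cols r0 e)).det)
    (hne : ∃ e, (A.submatrix id (Function.update cols r0 e)).det ≠ 0) :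
    ∃ y : R → ℝ, (∀ e, 0 ≤ Matrix.vecMul y A e) ∧ Matrix.vecMul y A ≠ 0 := by
  classical
  set y' : R → ℝ :=
    fun r => (A.submatrix id cols).cramer (fun j => if r = j then 1 else 0) r0 with hy'_def
  have hsm : ∀ e, Matrix.vecMul (ε • y') A e = ε * Matrix.vecMul y' A e := by
    intro e
    simp [Matrix.vecMul, dotProduct, Finset.mul_sum, mul_assoc]
  refine ⟨ε • y', ?_, ?_⟩
  · intro e
    rw [hsm e, ← det_update_eq]
    exact hnn e
  · obtain ⟨e0, he0⟩ := hne
    intro h0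
    apply he0
    have hc := congrFun h0 e0
    rw [hsm e0, ← det_update_eq] at hc
    rcases hε with h | h <;> rw [h] at hc <;> simp only [Pi.zero_apply] at hc <;> linarith

lemma span_top_of_rank (A : Matrix R C ℝ) (hr : A.rank = Fintype.card R) :
    Submodule.span ℝ (Set.range (colE A)) = ⊤ := by
  apply Submodule.eq_top_of_finrank_eq
  rw [finrank_euclideanSpace, ← hr, Matrix.rank_eq_finrank_span_cols]
  have hrng : Set.range (colE A)
      = ((WithLp.linearEquiv 2 ℝ (R → ℝ)).symm.toLinearMap) '' Set.range A.col := by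
    rw [← Set.range_comp]; rfl
  rw [hrng, Submodule.span_image]
  exact LinearEquiv.finrank_map_eq _ _

lemma span_top_transfer (A A' : Matrix R C ℝ)
    (hs : ∀ cols : R → C, Function.Injective cols →
      Real.sign (A.submatrix id cols).det = Real.sign (A'.submatrix id cols).det)
    (hsp : Submodule.span ℝ (Set.range (colE A)) = ⊤) :
    Submodule.span ℝ (Set.range (colE A')) = ⊤ := by
  classical
  obtain ⟨b, hbsub, hbspan, hbind⟩ := exists_linearIndependent ℝ (Set.range (colE A))
  rw [hsp] at hbspan
  haveI hbfin : Fintype b := (Set.Finite.subset (Set.finite_range (colE A)) hbsub).fintype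
  have hcard : b.toFinset.card = Fintype.card R := by
    have h1 := finrank_span_set_eq_card (s := b) hbind
    rw [hbspan, finrank_top, finrank_euclideanSpace] at h1
    omega
  have hchoice : ∀ v : b, ∃ e : C, colE A e = (v : EuclideanSpace ℝ R) := fun v => hbsub v.2
  choose φ hφ using hchoice
  have hcard2 : Fintype.card R = Fintype.card b := by
    rw [Set.toFinset_card] at hcard
    omega
  set κ : R ≃ b := Fintype.equivOfCardEq hcard2 with hκ_def
  set cols0 : R → C := fun r => φ (κ r) with hcols0_def
  have hcolval : ∀ r, colE A (cols0 r) = ↑(κ r) := fun r => hφ (κ r)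
  have hinj : Function.Injective cols0 := by
    intro r1 r2 h12
    have hval : (κ r1 : EuclideanSpace ℝ R) = κ r2 := by
      rw [← hcolval, ← hcolval, h12]
    exact κ.injective (Subtype.coe_injective hval)
  have hdetA : (A.submatrix id cols0).det ≠ 0 := by
    rw [det_ne_zero_iff_indep]
    have hrw : (fun r => colE A (cols0 r)) = (Subtype.val ∘ κ) := funext hcolval
    rw [hrw]
    exact hbind.comp κ κ.injective
  have hdetA' : (A'.submatrix id cols0).det ≠ 0 := by
    intro h0
    exact hdetA (((sign_transfer (hs cols0 hinj)).2).mpr h0)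
  have hindA' := (det_ne_zero_iff_indep A' cols0).mp hdetA'
  apply Submodule.eq_top_of_finrank_eq
  rw [finrank_euclideanSpace]
  have hle1 : Submodule.span ℝ (Set.range fun r => colE A' (cols0 r))
      ≤ Submodule.span ℝ (Set.range (colE A')) :=
    Submodule.span_mono (by rintro _ ⟨r, rfl⟩; exact ⟨cols0 r, rfl⟩)
  have h2 := finrank_span_eq_card hindA'
  have h3 := Submodule.finrank_mono hle1
  have h4 := Submodule.finrank_le (Submodule.span ℝ (Set.range (colE A')))
  rw [finrank_euclideanSpace] at h4
  omega

end

end PayoffAux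


namespace PayoffAux
set_option linter.unusedSectionVars false
set_option maxHeartbeats 1000000

variable {R C : Type*} [Fintype R] [DecidableEq R] [Fintype C] [DecidableEq C]

noncomputable section

def Zsp (A : Matrix R C ℝ) (y : R → ℝ) : Submodule ℝ (EuclideanSpace ℝ R) :=
  Submodule.span ℝ (colE A '' {e | Matrix.vecMul y A e = 0})

lemma improve (A : Matrix R C ℝ)
    (hsp : Submodule.span ℝ (Set.range (colE A)) = ⊤) :
    ∀ (k : ℕ) (y : R → ℝ), (∀ e, 0 ≤ Matrix.vecMul y A e) → Matrix.vecMul y A ≠ 0 →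
      Fintype.card R - 1 ≤ k + Module.finrank ℝ (Zsp A y) →
      ∃ y', (∀ e, 0 ≤ Matrix.vecMul y' A e) ∧ Matrix.vecMul y' A ≠ 0 ∧
        Fintype.card R - 1 ≤ Module.finrank ℝ (Zsp A y') := by
  intro k
  induction k with
  | zero => exact fun y h1 h2 h3 => ⟨y, h1, h2, by simpa using h3⟩
  | succ k ih =>
    intro y h1 h2 h3
    by_cases hdone : Fintype.card R - 1 ≤ Module.finrank ℝ (Zsp A y)
    · exact ⟨y, h1, h2, hdone⟩
    push_neg at hdone
    have hy0 : y ≠ 0 := fun h0 => h2 (by rw [h0, Matrix.zero_vecMul])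
    set W : Submodule ℝ (EuclideanSpace ℝ R) :=
      Zsp A y ⊔ Submodule.span ℝ {toE y} with hW_def
    have hymem : toE y ∈ W := Submodule.mem_sup_right (Submodule.mem_span_singleton_self _)
    have hfW : Module.finrank ℝ W < Fintype.card R := by
      have hsup := Submodule.finrank_sup_add_finrank_inf_eq (Zsp A y)
        (Submodule.span ℝ {toE y})
      have h1' : Module.finrank ℝ (Submodule.span ℝ ({toE y} : Set (EuclideanSpace ℝ R))) = 1 :=
        finrank_span_singleton (by simpa [toE] using hy0)
      rw [h1', ← hW_def] at hsup
      omega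
    have hWne : W ≠ ⊤ := by
      intro htop
      rw [htop, finrank_top, finrank_euclideanSpace] at hfW
      omega
    have hWbot : Wᗮ ≠ ⊥ := fun hbot => hWne (Submodule.orthogonal_eq_bot_iff.mp hbot)
    obtain ⟨z0, hz0W, hz0ne⟩ := Submodule.exists_mem_ne_zero_of_ne_bot hWbot
    have hz0all : ∃ e, Matrix.vecMul z0 A e ≠ 0 := by
      by_contra hall
      push_neg at hall
      exact hz0ne ((WithLp.ofLp_eq_zero 2).mp (eq_zero_of_vecMul_eq_zero A hsp z0 (funext hall)))
    obtain ⟨e1, he1⟩ := hz0all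
    have key : ∀ z : EuclideanSpace ℝ R, z ∈ Wᗮ →
        (∃ e1', Matrix.vecMul z A e1' < 0) →
        ∃ y', (∀ e, 0 ≤ Matrix.vecMul y' A e) ∧ Matrix.vecMul y' A ≠ 0 ∧
          Fintype.card R - 1 ≤ Module.finrank ℝ (Zsp A y') := by
      rintro z hzW ⟨e1', he1neg⟩
      have hzne : z ≠ 0 := by
        intro h0
        rw [h0, WithLp.ofLp_zero] at he1neg
        have : Matrix.vecMul (0 : R → ℝ) A = 0 := Matrix.zero_vecMul A
        rw [this] at he1neg
        simp at he1neg
      have hzZ : ∀ e, Matrix.vecMul y A e = 0 → Matrix.vecMul z A e = 0 := by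
        intro e he
        have hcol : colE A e ∈ W := Submodule.mem_sup_left (Submodule.subset_span ⟨e, he, rfl⟩)
        have hi := (Submodule.mem_orthogonal W z).mp hzW _ hcol
        rw [inner_colE] at hi
        exact hi
      have hzy : (inner ℝ (toE y) z : ℝ) = 0 :=
        (Submodule.mem_orthogonal W z).mp hzW _ hymem
      set T : Finset C := Finset.univ.filter (fun e => Matrix.vecMul z A e < 0) with hT_def
      have hTne : T.Nonempty := ⟨e1', by simp [hT_def, he1neg]⟩
      obtain ⟨estar, hestarT, hmin⟩ := Finset.exists_min_image T
        (fun e => Matrix.vecMul y A e / (-(Matrix.vecMul z A e))) hTne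
      have hTpos : ∀ e ∈ T, 0 < Matrix.vecMul y A e := by
        intro e heT
        rcases (h1 e).lt_or_eq with h | h
        · exact h
        · exfalso
          have hzz := hzZ e h.symm
          rw [hT_def] at heT
          simp only [Finset.mem_filter, Finset.mem_univ, true_and] at heT
          linarith
      have hgestar : Matrix.vecMul z A estar < 0 := by
        rw [hT_def] at hestarT
        simpa using hestarT
      set tstar : ℝ := Matrix.vecMul y A estar / (-(Matrix.vecMul z A estar)) with ht_def
      have htpos : 0 < tstar := div_pos (hTpos _ hestarT) (by linarith)
      set y2 : R → ℝ := fun r => y r + tstar * z r with hy2_def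
      have hvm2 : ∀ e, Matrix.vecMul y2 A e
          = Matrix.vecMul y A e + tstar * Matrix.vecMul z A e := by
        intro e
        simp only [hy2_def, Matrix.vecMul, dotProduct, Finset.mul_sum]
        rw [← Finset.sum_add_distrib]
        exact Finset.sum_congr rfl (fun r _ => by ring)
      have h1' : ∀ e, 0 ≤ Matrix.vecMul y2 A e := by
        intro e
        rw [hvm2]
        by_cases heT : e ∈ T
        · have hge : Matrix.vecMul z A e < 0 := by
            rw [hT_def] at heT
            simpa using heT
          have hmin' := hmin e heT
          have hmul := (le_div_iff₀ (by linarith : (0:ℝ) < -(Matrix.vecMul z A e))).mp hmin'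
          linarith
        · have hge : 0 ≤ Matrix.vecMul z A e := by
            rw [hT_def] at heT
            simp only [Finset.mem_filter, Finset.mem_univ, true_and, not_lt] at heT
            exact heT
          have := mul_nonneg htpos.le hge
          linarith [h1 e]
      have hy2ne : y2 ≠ 0 := by
        intro h0
        have hyz : ∑ r, y r * z r = 0 := by
          rw [← inner_eq_sum]
          exact hzy
        have hzero : ∑ r, y2 r * z r = 0 := by
          rw [h0]
          simp
        have hsplit : ∑ r, y2 r * z r = ∑ r, y r * z r + tstar * ∑ r, z r * z r := by
          simp only [hy2_def, Finset.mul_sum]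
          rw [← Finset.sum_add_distrib]
          exact Finset.sum_congr rfl (fun r _ => by ring)
        have hzz : ∑ r, z r * z r = 0 := by
          rw [hsplit, hyz, zero_add] at hzero
          rcases mul_eq_zero.mp hzero with h | h
          · linarith
          · exact h
        exact hzne ((WithLp.ofLp_eq_zero 2).mp (dotProduct_self_eq_zero.mp hzz))
      have h2' : Matrix.vecMul y2 A ≠ 0 :=
        fun h0 => hy2ne (eq_zero_of_vecMul_eq_zero A hsp y2 h0)
      have hZle : Zsp A y ≤ Zsp A y2 := Submodule.span_mono (by
        rintro _ ⟨e, he, rfl⟩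
        refine ⟨e, ?_, rfl⟩
        show Matrix.vecMul y2 A e = 0
        rw [hvm2, he, hzZ e he]
        ring)
      have hcestar : Matrix.vecMul y2 A estar = 0 := by
        rw [hvm2]
        have hne0 : -(Matrix.vecMul z A estar) ≠ 0 := by linarith
        have hfld : tstar * Matrix.vecMul z A estar = -(Matrix.vecMul y A estar) := by
          rw [ht_def]
          rw [div_neg, neg_mul, div_mul_cancel₀ _ (neg_ne_zero.mp hne0)]
        linarith
      have hmemnew : colE A estar ∈ Zsp A y2 :=
        Submodule.subset_span ⟨estar, hcestar, rfl⟩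
      have hnotold : colE A estar ∉ Zsp A y := by
        intro hmem
        have hcW : colE A estar ∈ W := Submodule.mem_sup_left hmem
        have hi := (Submodule.mem_orthogonal W z).mp hzW _ hcW
        rw [inner_colE] at hi
        linarith
      have hlt : Zsp A y < Zsp A y2 :=
        lt_of_le_of_ne hZle (fun hEq => hnotold (hEq ▸ hmemnew))
      have hfrk := Submodule.finrank_lt_finrank_of_lt hlt
      exact ih y2 h1' h2' (by omega)
    rcases he1.lt_or_gt with hneg | hpos
    · exact key z0 hz0W ⟨e1, hneg⟩
    · refine key (-z0) (Submodule.neg_mem _ hz0W) ⟨e1, ?_⟩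
      have : Matrix.vecMul (-z0).ofLp A e1 = -(Matrix.vecMul z0 A e1) := by
        simp [Matrix.vecMul, dotProduct, neg_mul]
      rw [this]
      linarith

end

end PayoffAux


namespace PayoffAux
set_option linter.unusedSectionVars false
set_option maxHeartbeats 1000000

variable {R C : Type*} [Fintype R] [DecidableEq R] [Fintype C] [DecidableEq C]

noncomputable section

lemma cobst_of_obst (A : Matrix R C ℝ)
    (hsp : Submodule.span ℝ (Set.range (colE A)) = ⊤)
    (y0 : R → ℝ) (h10 : ∀ e, 0 ≤ Matrix.vecMul y0 A e) (h20 : Matrix.vecMul y0 A ≠ 0) :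
    ∃ (cols : R → C) (r0 : R) (ε : ℝ), (ε = 1 ∨ ε = -1) ∧
      (∀ e, 0 ≤ ε * (A.submatrix id (Function.update cols r0 e)).det) ∧
      (∃ e, (A.submatrix id (Function.update cols r0 e)).det ≠ 0) := by
  classical
  obtain ⟨y, h1, h2, hfr⟩ := improve A hsp (Fintype.card R) y0 h10 h20 (by omega)
  have hR : Nonempty R := by
    by_contra hre
    rw [not_nonempty_iff] at hre
    apply h2
    funext e
    simp [Matrix.vecMul, dotProduct, Finset.univ_eq_empty]
  haveI := hR
  have hC : Nonempty C := by
    by_contra hce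
    rw [not_nonempty_iff] at hce
    apply h2
    funext e
    exact (hce.false e).elim
  haveI := hC
  have hy0 : y ≠ 0 := fun h0 => h2 (by rw [h0, Matrix.zero_vecMul])
  have hm1 : 1 ≤ Fintype.card R := Fintype.card_pos
  have hyperp : toE y ∈ (Zsp A y)ᗮ := by
    apply mem_orth_span_set
    rintro u ⟨e, he, rfl⟩
    rw [inner_colE]
    exact he
  have hspanle : Submodule.span ℝ {toE y} ≤ (Zsp A y)ᗮ := by
    rw [Submodule.span_le, Set.singleton_subset_iff]
    exact hyperp
  have hys : Module.finrank ℝ (Submodule.span ℝ ({toE y} : Set (EuclideanSpace ℝ R))) = 1 :=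
    finrank_span_singleton (by simpa [toE] using hy0)
  have horthge : 1 ≤ Module.finrank ℝ ((Zsp A y)ᗮ) := by
    rw [← hys]
    exact Submodule.finrank_mono hspanle
  have hsum := Submodule.finrank_add_finrank_orthogonal (Zsp A y)
  rw [finrank_euclideanSpace] at hsum
  have hfrEq : Module.finrank ℝ (Zsp A y) = Fintype.card R - 1 := by omega
  have horthEq : Module.finrank ℝ ((Zsp A y)ᗮ) = 1 := by omega
  have horth_span : (Zsp A y)ᗮ = Submodule.span ℝ {toE y} :=
    (Submodule.eq_of_le_of_finrank_le hspanle (by omega)).symm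
  -- extract a basis of the zero-column span
  obtain ⟨b, hbsub, hbspan, hbind⟩ :=
    exists_linearIndependent ℝ (colE A '' {e | Matrix.vecMul y A e = 0})
  haveI hbfin : Fintype b :=
    (Set.Finite.subset ((Set.toFinite {e | Matrix.vecMul y A e = 0}).image _) hbsub).fintype
  have hbspanZ : Submodule.span ℝ b = Zsp A y := hbspan
  have hbcard : b.toFinset.card = Fintype.card R - 1 := by
    have h1' := finrank_span_set_eq_card (s := b) hbind
    rw [hbspanZ, hfrEq] at h1'
    omega
  let r0 : R := Classical.arbitrary R
  have hcards : Fintype.card {r : R // r ≠ r0} = Fintype.card b := by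
    have hcompl := Fintype.card_subtype_compl (fun r : R => r = r0)
    rw [Fintype.card_subtype_eq] at hcompl
    rw [Set.toFinset_card] at hbcard
    have : Fintype.card {r : R // r ≠ r0} = Fintype.card {r : R // ¬ r = r0} := rfl
    omega
  set κ : {r : R // r ≠ r0} ≃ b := Fintype.equivOfCardEq hcards with hκ_def
  have hchoice : ∀ v : b, ∃ e : C, Matrix.vecMul y A e = 0 ∧ colE A e = ↑v := by
    intro v
    obtain ⟨e, he, heq⟩ := hbsub v.2
    exact ⟨e, he, heq⟩
  choose φ hφ1 hφ2 using hchoice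
  set cols : R → C :=
    fun r => if h : r = r0 then Classical.arbitrary C else φ (κ ⟨r, h⟩) with hcols_def
  set y' : R → ℝ :=
    fun r => (A.submatrix id cols).cramer (fun j => if r = j then 1 else 0) r0 with hy'_def
  have hD : ∀ e, (A.submatrix id (Function.update cols r0 e)).det = Matrix.vecMul y' A e :=
    fun e => det_update_eq A cols r0 e
  have hcolval : ∀ (r : R) (h : r ≠ r0), colE A (cols r) = ↑(κ ⟨r, h⟩) := by
    intro r h
    have : cols r = φ (κ ⟨r, h⟩) := by
      simp only [hcols_def]
      rw [dif_neg h]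
    rw [this, hφ2]
  -- y' is orthogonal to b
  have hy'b : ∀ v : b, (inner ℝ (v : EuclideanSpace ℝ R) (toE y') : ℝ) = 0 := by
    intro v
    obtain ⟨r, hr⟩ : ∃ r : {r : R // r ≠ r0}, κ r = v := ⟨κ.symm v, κ.apply_symm_apply v⟩
    have hcolr : cols ↑r = φ v := by
      simp only [hcols_def]
      rw [dif_neg r.2]
      exact congrArg φ ((congrArg κ (Subtype.eta r r.2)).trans hr)
    have hdup : (A.submatrix id (Function.update cols r0 (φ v))).det = 0 := by
      apply Matrix.det_zero_of_column_eq (i := (↑r : R)) (j := r0) r.2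
      intro k
      have hcol1 : Function.update cols r0 (φ v) ↑r = cols ↑r := Function.update_of_ne r.2 _ _
      have hcol2 : Function.update cols r0 (φ v) r0 = φ v := Function.update_self _ _ _
      simp [Matrix.submatrix_apply, hcol1, hcol2, hcolr]
    have hvm : Matrix.vecMul y' A (φ v) = 0 := by
      rw [← hD]
      exact hdup
    rw [← hφ2 v, inner_colE]
    exact hvm
  have hy'perp : toE y' ∈ (Zsp A y)ᗮ := by
    rw [← hbspanZ]
    exact mem_orth_span_set _ _ (fun u hu => hy'b ⟨u, hu⟩)
  rw [horth_span] at hy'perp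
  obtain ⟨a, ha⟩ := Submodule.mem_span_singleton.mp hy'perp
  have hy'r : ∀ r, y' r = a * y r := fun r => by simpa [toE] using (congrArg (fun v => v r) ha).symm
  -- a column outside the hyperplane
  have he0ex : ∃ e0, colE A e0 ∉ Zsp A y := by
    by_contra hall
    push_neg at hall
    have hle : Submodule.span ℝ (Set.range (colE A)) ≤ Zsp A y :=
      Submodule.span_le.mpr (by rintro _ ⟨e, rfl⟩; exact hall e)
    rw [hsp] at hle
    have hZtop : Zsp A y = ⊤ := top_le_iff.mp hle
    rw [hZtop, finrank_top, finrank_euclideanSpace] at hfrEq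
    omega
  obtain ⟨e0, he0⟩ := he0ex
  have hdet0 : (A.submatrix id (Function.update cols r0 e0)).det ≠ 0 := by
    rw [det_ne_zero_iff_indep]
    rw [Fintype.linearIndependent_iff]
    intro g hg r
    have hsplit : ∑ r', g r' • colE A (Function.update cols r0 e0 r')
        = (∑ r' ∈ Finset.univ.erase r0, g r' • colE A (cols r')) + g r0 • colE A e0 := by
      rw [← Finset.sum_erase_add Finset.univ _ (Finset.mem_univ r0), Function.update_self]
      congr 1
      refine Finset.sum_congr rfl (fun r' hr' => ?_)
      rw [Function.update_of_ne (Finset.ne_of_mem_erase hr')]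
    have hmemZ : (∑ r' ∈ Finset.univ.erase r0, g r' • colE A (cols r')) ∈ Zsp A y := by
      rw [← hbspanZ]
      apply Submodule.sum_mem
      intro r' hr'
      have hne := Finset.ne_of_mem_erase hr'
      rw [hcolval r' hne]
      exact Submodule.smul_mem _ _ (Submodule.subset_span (κ ⟨r', hne⟩).2)
    rw [hsplit] at hg
    have hg_r0 : g r0 = 0 := by
      by_contra hgr0
      apply he0
      have hv : g r0 • colE A e0 = -(∑ r' ∈ Finset.univ.erase r0, g r' • colE A (cols r')) := by
        rw [add_comm] at hg
        rwa [add_eq_zero_iff_eq_neg] at hg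
      have hrwe : colE A e0
          = (g r0)⁻¹ • (-(∑ r' ∈ Finset.univ.erase r0, g r' • colE A (cols r'))) := by
        rw [← hv, smul_smul, inv_mul_cancel₀ hgr0, one_smul]
      rw [hrwe]
      exact Submodule.smul_mem _ _ (Submodule.neg_mem _ hmemZ)
    rw [hg_r0, zero_smul, add_zero] at hg
    by_cases hrr0 : r = r0
    · rw [hrr0]
      exact hg_r0
    · have hindκ : LinearIndependent ℝ
          (fun r' : {r : R // r ≠ r0} => ((κ r' : b) : EuclideanSpace ℝ R)) :=
        hbind.comp κ κ.injective
      have hsum2 : ∑ r' : {r : R // r ≠ r0}, g ↑r' • ((κ r' : b) : EuclideanSpace ℝ R) = 0 := by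
        rw [← hg, eq_comm]
        rw [Finset.sum_subtype (p := fun r' => r' ≠ r0) (Finset.univ.erase r0)
          (by intro x; simp [Finset.mem_erase]) (fun r' => g r' • colE A (cols r'))]
        refine Finset.sum_congr rfl (fun r' _ => ?_)
        rw [hcolval (↑r' : R) r'.2]
      exact Fintype.linearIndependent_iff.mp hindκ (fun r' => g ↑r') hsum2 ⟨r, hrr0⟩
  have hane : a ≠ 0 := by
    intro ha0
    apply hdet0
    rw [hD]
    have hy'z : y' = 0 := by
      funext r
      rw [hy'r r, ha0, zero_mul]
      simp
    rw [hy'z, Matrix.zero_vecMul]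
    rfl
  refine ⟨cols, r0, if 0 < a then 1 else -1, by split <;> simp, ?_, ⟨e0, hdet0⟩⟩
  intro e
  have hDe : (A.submatrix id (Function.update cols r0 e)).det = a * Matrix.vecMul y A e := by
    rw [hD]
    simp only [Matrix.vecMul, dotProduct]
    rw [Finset.mul_sum]
    exact Finset.sum_congr rfl (fun r _ => by rw [hy'r r]; ring)
  rw [hDe]
  by_cases hapos : 0 < a
  · rw [if_pos hapos, one_mul]
    exact mul_nonneg hapos.le (h1 e)
  · rw [if_neg hapos]
    have haneg : a < 0 := lt_of_le_of_ne (not_lt.mp hapos) hane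
    have := mul_nonneg (by linarith : (0:ℝ) ≤ -a) (h1 e)
    linarith [this]

end

end PayoffAux


namespace PayoffAux
set_option linter.unusedSectionVars false
set_option maxHeartbeats 1000000

variable {R C : Type*} [Fintype R] [DecidableEq R] [Fintype C] [DecidableEq C]

noncomputable section

lemma sign_transfer3 {a b : ℝ} (h : Real.sign a = Real.sign b) :
    (0 < a ↔ 0 < b) ∧ (a = 0 ↔ b = 0) ∧ (a < 0 ↔ b < 0) := by
  obtain ⟨h1, h2⟩ := sign_transfer h
  refine ⟨h1, h2, ?_⟩
  constructor
  · intro ha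
    rcases lt_trichotomy b 0 with hb | hb | hb
    · exact hb
    · exact absurd (h2.mpr hb) (by linarith)
    · exact absurd (h1.mpr hb) (by linarith)
  · intro hb
    rcases lt_trichotomy a 0 with ha | ha | ha
    · exact ha
    · exact absurd (h2.mp ha) (by linarith)
    · exact absurd (h1.mp ha) (by linarith)

lemma cobst_transfer (A A' : Matrix R C ℝ)
    (hs : ∀ cols : R → C, Function.Injective cols →
      Real.sign (A.submatrix id cols).det = Real.sign (A'.submatrix id cols).det)
    (h : ∃ (cols : R → C) (r0 : R) (ε : ℝ), (ε = 1 ∨ ε = -1) ∧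
      (∀ e, 0 ≤ ε * (A.submatrix id (Function.update cols r0 e)).det) ∧
      (∃ e, (A.submatrix id (Function.update cols r0 e)).det ≠ 0)) :
    ∃ (cols : R → C) (r0 : R) (ε : ℝ), (ε = 1 ∨ ε = -1) ∧
      (∀ e, 0 ≤ ε * (A'.submatrix id (Function.update cols r0 e)).det) ∧
      (∃ e, (A'.submatrix id (Function.update cols r0 e)).det ≠ 0) := by
  classical
  obtain ⟨cols, r0, ε, hε, hnn, e0, hne⟩ := h
  refine ⟨cols, r0, ε, hε, ?_, ⟨e0, ?_⟩⟩
  · intro e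
    by_cases hinj : Function.Injective (Function.update cols r0 e)
    · obtain ⟨h1, h2, h3⟩ := sign_transfer3 (hs _ hinj)
      have hnne := hnn e
      rcases hε with h' | h' <;> subst h'
      · rw [one_mul] at hnne ⊢
        rcases lt_trichotomy ((A.submatrix id (Function.update cols r0 e)).det) 0
          with hlt | heq | hgt
        · linarith
        · linarith [h2.mp heq]
        · linarith [h1.mp hgt]
      · rw [neg_one_mul] at hnne ⊢
        rcases lt_trichotomy ((A.submatrix id (Function.update cols r0 e)).det) 0
          with hlt | heq | hgt
        · linarith [h3.mp hlt]
        · linarith [h2.mp heq]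
        · linarith
    · rw [det_submatrix_zero_of_not_inj A' _ hinj, mul_zero]
  · have hinj : Function.Injective (Function.update cols r0 e0) := by
      by_contra hni
      exact hne (det_submatrix_zero_of_not_inj A _ hni)
    obtain ⟨h1, h2, h3⟩ := sign_transfer3 (hs _ hinj)
    intro h0
    exact hne (h2.mpr h0)

lemma pos_transfer (A A' : Matrix R C ℝ)
    (hspA' : Submodule.span ℝ (Set.range (colE A')) = ⊤)
    (hs' : ∀ cols : R → C, Function.Injective cols →
      Real.sign (A'.submatrix id cols).det = Real.sign (A.submatrix id cols).det) :
    (∃ P : C → ℝ, (∀ e, 0 < P e) ∧ A.mulVec P = 0) →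
    (∃ P : C → ℝ, (∀ e, 0 < P e) ∧ A'.mulVec P = 0) := by
  rintro ⟨P, hP, hAP⟩
  by_contra hnot
  obtain ⟨y, hy1, hy2⟩ := stiemke_hard A' hnot
  have hco := cobst_of_obst A' hspA' y hy1 hy2
  obtain ⟨cols2, r02, ε2, hε2, hnn2, hne2⟩ := cobst_transfer A' A hs' hco
  obtain ⟨y2, hy21, hy22⟩ := obst_of_cobst A cols2 r02 ε2 hε2 hnn2 hne2
  exact stiemke_easy A y2 hy21 hy22 P hP hAP

end

end PayoffAux


open PayoffAux

/-- Whether a point `x ∈ ℝⁿ` belongs to the payoff region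
(i.e. whether the kernel of `K_X(x)` contains a strictly positive tensor)
depends only on the oriented matroid stratum of `x`, i.e. on the signs of the
maximal minors of the Konstanz matrix. -/
theorem payoff_region_oriented_matroid_invariance
    (n : ℕ) (d : Fin n → ℕ) (hd : ∀ i, 1 ≤ d i)
    (X : Fin n → ((l : Fin n) → Fin (d l)) → ℝ)
    (K : (Fin n → ℝ) →
      Matrix ((i : Fin n) × Fin (d i)) ((l : Fin n) → Fin (d l)) ℝ)
    (hK : ∀ (x : Fin n → ℝ) (i : Fin n) (k : Fin (d i))
      (j : (l : Fin n) → Fin (d l)),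
      K x ⟨i, k⟩ j = if j i = k then x i - X i j else 0)
    (x x' : Fin n → ℝ)
    (hrank : (K x).rank = ∑ i, d i)
    (hsign : ∀ cols : ((i : Fin n) × Fin (d i)) → ((l : Fin n) → Fin (d l)),
      Function.Injective cols →
      Real.sign (Matrix.det (Matrix.of fun r r' => K x r (cols r'))) =
        Real.sign (Matrix.det (Matrix.of fun r r' => K x' r (cols r')))) :
    (∃ P : ((l : Fin n) → Fin (d l)) → ℝ,
        (∀ j, 0 < P j) ∧ (K x).mulVec P = 0)
    ↔ (∃ P : ((l : Fin n) → Fin (d l)) → ℝ,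
        (∀ j, 0 < P j) ∧ (K x').mulVec P = 0) := by
  classical
  have hs : ∀ cols : ((i : Fin n) × Fin (d i)) → ((l : Fin n) → Fin (d l)),
      Function.Injective cols →
      Real.sign ((K x).submatrix id cols).det = Real.sign ((K x').submatrix id cols).det :=
    fun cols hinj => hsign cols hinj
  have hrank' : (K x).rank = Fintype.card ((i : Fin n) × Fin (d i)) := by
    rw [hrank, Fintype.card_sigma]
    simp
  have hspA := span_top_of_rank (K x) hrank'
  have hspA' := span_top_transfer (K x) (K x') hs hspA
  constructor
  · exact pos_transfer (K x) (K x') hspA' (fun cols hinj => (hs cols hinj).symm)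
  · exact pos_transfer (K x') (K x) hspA (fun cols hinj => hs cols hinj)
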